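/- If L_n^H(G) is Hamiltonian for some n ≥ 3, then the H-colored multigraph G has a closed Euler dynamic H-trail. -/

import Mathlib

namespace DynH

/-- A multigraph without loops: each edge `e` has two distinct endpoints
`G.fst e` and `G.snd e`. Parallel edges are allowed since `E` is an abstract
edge type. -/
structure Multigraph (V E : Type) where
  fst : E → V
  snd : E → V
  loopless : ∀ e, fst e ≠ snd e

variable {V E C : Type}

namespace Multigraph

/-- The vertex `x` is incident with the edge `e`. -/
def inc (G : Multigraph V E) (x : V) (e : E) : Prop := G.fst e = x ∨ G.snd e = x

/-- The edge `e` joins the vertices `x` and `y`. -/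
def joins (G : Multigraph V E) (e : E) (x y : V) : Prop :=
  (G.fst e = x ∧ G.snd e = y) ∨ (G.fst e = y ∧ G.snd e = x)

/-- `e` and `g` have the same pair of end vertices. -/
def parallel (G : Multigraph V E) (e g : E) : Prop :=
  (G.fst e = G.fst g ∧ G.snd e = G.snd g) ∨ (G.fst e = G.snd g ∧ G.snd e = G.fst g)

end Multigraph

instance Multigraph.decInc (G : Multigraph V E) [DecidableEq V] :
    ∀ (x : V) (e : E), Decidable (G.inc x e) := fun x e => by
  unfold Multigraph.inc; infer_instance

/-- The underlying simple graph of a multigraph (used to express connectedness). -/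
def SupportGraph (G : Multigraph V E) : SimpleGraph V where
  Adj x y := x ≠ y ∧ ∃ e, G.joins e x y
  symm := by
    constructor
    rintro x y ⟨hxy, e, he⟩
    exact ⟨hxy.symm, e, he.symm⟩
  loopless := ⟨fun x h => h.1 rfl⟩

/-- Vertices of `L_2^H(G)`: the incidences `f(x,e)`. -/
def L2V (G : Multigraph V E) : Type := {p : V × E // G.inc p.1 p.2}

instance (G : Multigraph V E) [DecidableEq V] [DecidableEq E] : DecidableEq (L2V G) := by
  unfold L2V; infer_instance

instance (G : Multigraph V E) [Fintype V] [Fintype E] [DecidableEq V] : Fintype (L2V G) := by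
  unfold L2V; infer_instance

/-- Adjacency of `L_2^H(G)` (one-sided; it is symmetrized below, which changes
nothing when `adjH` is symmetric). -/
def L2Adj (G : Multigraph V E) (adjH : C → C → Prop) (c : E → C) (p q : L2V G) : Prop :=
  (p.val.2 = q.val.2 ∧ p.val.1 ≠ q.val.1)
  ∨ (p.val.1 = q.val.1 ∧ p.val.2 ≠ q.val.2 ∧ adjH (c p.val.2) (c q.val.2))
  ∨ (p.val.1 ≠ q.val.1 ∧ p.val.2 ≠ q.val.2 ∧ G.parallel p.val.2 q.val.2)

/-- The auxiliary simple graph `L_2^H(G)`. -/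
def L2Graph (G : Multigraph V E) (adjH : C → C → Prop) (c : E → C) :
    SimpleGraph (L2V G) where
  Adj p q := L2Adj G adjH c p q ∨ L2Adj G adjH c q p
  symm := ⟨fun _ _ h => Or.symm h⟩
  loopless := ⟨fun p h => by
    rcases h with h | h <;> rcases h with ⟨_, h⟩ | ⟨_, h, _⟩ | ⟨h, _⟩ <;> exact h rfl⟩

/-- The joint matching `M_J = { f(x,e)f(y,e) : e = xy ∈ E(G) }` of `L_2^H(G)`. -/
def MJ (G : Multigraph V E) : Set (Sym2 (L2V G)) :=
  {s | ∃ p q : L2V G, s = s(p, q) ∧ p ≠ q ∧ p.val.2 = q.val.2}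

/-- A matching of a simple graph, given as a set of edges. -/
def IsMatchingSet {α : Type} (Gr : SimpleGraph α) (M : Set (Sym2 α)) : Prop :=
  M ⊆ Gr.edgeSet ∧ ∀ v : α, ∀ s ∈ M, ∀ t ∈ M, v ∈ s → v ∈ t → s = t

/-- A perfect matching of a simple graph, given as a set of edges. -/
def IsPerfectMatchingSet {α : Type} (Gr : SimpleGraph α) (M : Set (Sym2 α)) : Prop :=
  IsMatchingSet Gr M ∧ ∀ v : α, ∃ s ∈ M, v ∈ s

/-- Every entry `(x, y, e)` of the list records a traversal of an edge `e`
joining `x` and `y` (from `x` to `y`). -/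
def GoodEntries (G : Multigraph V E) (L : List (V × V × E)) : Prop :=
  ∀ t ∈ L, G.joins t.2.2 t.1 t.2.1

/-- The list of edges underlying a list of edge traversals. -/
def edgesOf (L : List (V × V × E)) : List E := L.map fun t => t.2.2

/-- Allowed consecutive pair in a dynamic `H`-trail: either a transition through a
common vertex with colors adjacent in `H`, or a lane change between parallel edges. -/
def DynStep (G : Multigraph V E) (adjH : C → C → Prop) (c : E → C)
    (a b : V × V × E) : Prop :=
  (a.2.1 = b.1 ∧ adjH (c a.2.2) (c b.2.2))
  ∨ (a.1 = b.1 ∧ a.2.1 = b.2.1 ∧ a.2.2 ≠ b.2.2 ∧ G.parallel a.2.2 b.2.2)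

/-- Allowed consecutive pair in an `H`-trail: transition through a common vertex
with colors adjacent in `H`. -/
def HStep (adjH : C → C → Prop) (c : E → C) (a b : V × V × E) : Prop :=
  a.2.1 = b.1 ∧ adjH (c a.2.2) (c b.2.2)

/-- A closed dynamic `H`-trail, encoded as the cyclic list of its edge traversals. -/
def IsClosedDynHTrail (G : Multigraph V E) (adjH : C → C → Prop) (c : E → C)
    (L : List (V × V × E)) : Prop :=
  L ≠ [] ∧ (edgesOf L).Nodup ∧ GoodEntries G L ∧
    ∀ p ∈ L.zip (L.rotate 1), DynStep G adjH c p.1 p.2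

/-- A closed `H`-trail, encoded as the cyclic list of its edge traversals. -/
def IsClosedHTrail (G : Multigraph V E) (adjH : C → C → Prop) (c : E → C)
    (L : List (V × V × E)) : Prop :=
  L ≠ [] ∧ (edgesOf L).Nodup ∧ GoodEntries G L ∧
    ∀ p ∈ L.zip (L.rotate 1), HStep adjH c p.1 p.2

/-- A (non-closed) dynamic `H`-trail. -/
def IsDynHTrail (G : Multigraph V E) (adjH : C → C → Prop) (c : E → C)
    (L : List (V × V × E)) : Prop :=
  L ≠ [] ∧ (edgesOf L).Nodup ∧ GoodEntries G L ∧
    ∀ p ∈ L.zip L.tail, DynStep G adjH c p.1 p.2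

/-- A (non-closed) `H`-trail. -/
def IsHTrail (G : Multigraph V E) (adjH : C → C → Prop) (c : E → C)
    (L : List (V × V × E)) : Prop :=
  L ≠ [] ∧ (edgesOf L).Nodup ∧ GoodEntries G L ∧
    ∀ p ∈ L.zip L.tail, HStep adjH c p.1 p.2

/-- A cycle in `L_2^H(G)` (as a cyclic list of distinct vertices) which alternates
between edges of the joint matching `M_J` (at even positions) and edges of
`E(L_2^H(G)) \ M_J` (at odd positions). -/
def IsAltCycle (G : Multigraph V E) (adjH : C → C → Prop) (c : E → C)
    (vs : List (L2V G)) : Prop :=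
  vs ≠ [] ∧ vs.Nodup ∧ 3 ≤ vs.length ∧
    ∀ k : Fin vs.length,
      (L2Graph G adjH c).Adj (vs.get k)
        (vs.get ⟨(k.val + 1) % vs.length, Nat.mod_lt _ (Nat.lt_of_le_of_lt (Nat.zero_le _) k.isLt)⟩) ∧
      (s(vs.get k,
          vs.get ⟨(k.val + 1) % vs.length,
            Nat.mod_lt _ (Nat.lt_of_le_of_lt (Nat.zero_le _) k.isLt)⟩) ∈ MJ G ↔ k.val % 2 = 0)

/-- The simple graph `G_x` on the edges of `G` incident with `x`; two such edges are
adjacent iff their colors are adjacent in `H`. (Symmetrized; this changes nothing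
when `adjH` is symmetric.) -/
def GxGraph (G : Multigraph V E) (adjH : C → C → Prop) (c : E → C) (x : V) :
    SimpleGraph {e : E // G.inc x e} where
  Adj a b := a ≠ b ∧ (adjH (c a.val) (c b.val) ∨ adjH (c b.val) (c a.val))
  symm := ⟨by rintro a b ⟨hab, h⟩; exact ⟨hab.symm, h.symm⟩⟩
  loopless := ⟨fun a h => h.1 rfl⟩

end DynH
namespace DynH

variable {V E C : Type}

/-- Adjacency for the auxiliary graph `L_n^H(G)` (`n ≥ 2`).  Its vertices are the
incidences `f(x,e)` together with, for each edge `e`, the `n - 2` intermediate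
vertices of the subdividing path.  (One-sided relation; symmetrized in `LnGraph`.) -/
def LnAdj (G : Multigraph V E) (adjH : C → C → Prop) (c : E → C) (n : ℕ) :
    (L2V G ⊕ E × Fin (n - 2)) → (L2V G ⊕ E × Fin (n - 2)) → Prop
  | Sum.inl p, Sum.inl q =>
      (p.val.1 = q.val.1 ∧ p.val.2 ≠ q.val.2 ∧ adjH (c p.val.2) (c q.val.2))
      ∨ (p.val.1 ≠ q.val.1 ∧ p.val.2 ≠ q.val.2 ∧ G.parallel p.val.2 q.val.2)
      ∨ (n = 2 ∧ p.val.2 = q.val.2 ∧ p.val.1 ≠ q.val.1)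
  | Sum.inl p, Sum.inr gi =>
      p.val.2 = gi.1 ∧
        ((p.val.1 = G.fst gi.1 ∧ gi.2.val = 0) ∨ (p.val.1 = G.snd gi.1 ∧ gi.2.val = n - 3))
  | Sum.inr gi, Sum.inl p =>
      p.val.2 = gi.1 ∧
        ((p.val.1 = G.fst gi.1 ∧ gi.2.val = 0) ∨ (p.val.1 = G.snd gi.1 ∧ gi.2.val = n - 3))
  | Sum.inr gi, Sum.inr gj =>
      gi.1 = gj.1 ∧ (gi.2.val + 1 = gj.2.val ∨ gj.2.val + 1 = gi.2.val)

/-- The auxiliary simple graph `L_n^H(G)`. -/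
def LnGraph (G : Multigraph V E) (adjH : C → C → Prop) (c : E → C) (n : ℕ) :
    SimpleGraph (L2V G ⊕ E × Fin (n - 2)) where
  Adj a b := LnAdj G adjH c n a b ∨ LnAdj G adjH c n b a
  symm := ⟨fun _ _ h => Or.symm h⟩
  loopless := ⟨fun a h => by
    rcases a with p | gi <;>
      rcases h with h | h <;> simp [LnAdj] at h <;> omega⟩

end DynH

/-!
For `n ≥ 3` every internal vertex of the path of `L_n^H(G)` subdividing an edge `e` has
degree two, so a Hamiltonian cycle runs through that path in one go: it enters at `f(x, e)`,
visits all internal vertices and leaves at `f(y, e)`. The cycle thus splits into `|E(G)|`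
consecutive blocks of `n` vertices, one per edge, and consecutive blocks are joined by an edge
`f(y, e) f(u, g)` of `L_n^H(G)`: either `u = y` and `c(e) c(g) ∈ E(H)`, a transition of an
`H`-trail, or `e, g` are parallel and `u ≠ y`, a lane change. Listing the traversals `x → y` of
the edges in block order gives a closed Euler dynamic `H`-trail. Positions on the cycle are
taken in `ZMod (n * |E(G)|)`, which makes the cycle close up by itself.
-/

namespace DynH

section

variable {α : Type*} {Γ : SimpleGraph α} {N : ℕ}

structure HamCycle (Γ : SimpleGraph α) (N : ℕ) where
  vert : ZMod N → α
  bijective : Function.Bijective vert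
  adj : ∀ k, Γ.Adj (vert k) (vert (k + 1))
  three_le : 3 ≤ N

lemma nonempty_hamCycle_of_isHamiltonian [Fintype α] [DecidableEq α] (hΓ : Γ.IsHamiltonian)
    (hcard : Fintype.card α ≠ 1) : Nonempty (HamCycle Γ (Fintype.card α)) := by
  obtain ⟨a, p, hp⟩ := hΓ hcard
  rw [← hp.length_eq]
  have h3 := hp.isCycle.three_le_length
  have : NeZero p.length := ⟨by omega⟩
  have hval : ∀ k : ZMod p.length, k.val ≤ p.length - 1 := fun k => by
    have := ZMod.val_lt k; omega
  have hinj : Function.Injective fun k : ZMod p.length => p.getVert k.val := fun k l h =>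
    ZMod.val_injective _ (hp.isCycle.getVert_injOn' (hval k) (hval l) h)
  refine ⟨⟨fun k => p.getVert k.val, ?_, fun k => ?_, h3⟩⟩
  · exact (Fintype.bijective_iff_injective_and_card _).2
      ⟨hinj, by rw [ZMod.card, hp.length_eq]⟩
  · have hk := p.adj_getVert_succ (ZMod.val_lt k)
    have hsucc : (k + 1).val = (k.val + 1) % p.length := by
      rw [ZMod.val_add, ZMod.val_one'' (by omega)]
    rcases (show k.val + 1 ≤ p.length from ZMod.val_lt k).lt_or_eq with hlt | heq
    · rwa [hsucc, Nat.mod_eq_of_lt hlt]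
    · rw [heq, p.getVert_length] at hk
      rwa [hsucc, heq, Nat.mod_self, p.getVert_zero]

namespace HamCycle

variable (cyc : HamCycle Γ N)

lemma succ_ne_pred (k : ZMod N) : cyc.vert (k + 1) ≠ cyc.vert (k - 1) := fun h => by
  have h2 : ((2 : ℕ) : ZMod N) = 0 := by
    have := cyc.bijective.1 h
    push_cast
    linear_combination this
  rw [ZMod.natCast_eq_zero_iff] at h2
  have := Nat.le_of_dvd two_pos h2
  have := cyc.three_le
  omega

def reverse : HamCycle Γ N where
  vert k := cyc.vert (-k)
  bijective := cyc.bijective.comp neg_bijective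
  adj k := by
    have := (cyc.adj (-k - 1)).symm
    rwa [sub_add_cancel, sub_eq_add_neg, ← neg_add] at this
  three_le := cyc.three_le

variable {cyc}

lemma succ_eq_of_pred_eq {k : ZMod N} {a b : α}
    (hnb : ∀ w, Γ.Adj w (cyc.vert k) → w = a ∨ w = b)
    (h : cyc.vert (k - 1) = a) : cyc.vert (k + 1) = b :=
  (hnb _ (cyc.adj k).symm).resolve_left fun h' => cyc.succ_ne_pred k (h'.trans h.symm)

lemma pred_eq_of_succ_eq {k : ZMod N} {a b : α}
    (hnb : ∀ w, Γ.Adj w (cyc.vert k) → w = a ∨ w = b)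
    (h : cyc.vert (k + 1) = a) : cyc.vert (k - 1) = b :=
  (hnb _ (by simpa using cyc.adj (k - 1))).resolve_left fun h' =>
    cyc.succ_ne_pred k (h.trans h'.symm)

end HamCycle

def IsSuspendedPath (Γ : SimpleGraph α) (Q : ℕ → α) (L : ℕ) : Prop :=
  ∀ m, 0 < m → m < L → ∀ w, Γ.Adj w (Q m) → w = Q (m - 1) ∨ w = Q (m + 1)

lemma IsSuspendedPath.reverse {Q : ℕ → α} {L : ℕ} (hQ : IsSuspendedPath Γ Q L) :
    IsSuspendedPath Γ (fun m => Q (L - m)) L := fun m h0 hm w hw =>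
  (hQ (L - m) (by omega) (by omega) w hw).symm.imp (by grind) (by grind)

lemma HamCycle.vert_add_eq_of_isSuspendedPath (cyc : HamCycle Γ N) {Q : ℕ → α} {L : ℕ}
    (hQ : IsSuspendedPath Γ Q L) {k : ZMod N} (h0 : cyc.vert k = Q 0)
    (h1 : cyc.vert (k + 1) = Q 1) : ∀ d ≤ L, cyc.vert (k + d) = Q d := by
  have hcast : ∀ d : ℕ, k + (d + 1 : ℕ) = k + d + 1 := fun d => by push_cast; ring
  suffices ∀ d, d + 1 ≤ L → cyc.vert (k + d) = Q d ∧ cyc.vert (k + d + 1) = Q (d + 1) by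
    rintro (_ | d) hd
    · simpa using h0
    · rw [hcast]; exact (this d hd).2
  intro d
  induction d with
  | zero => exact fun _ => ⟨by simpa using h0, by simpa using h1⟩
  | succ d ih =>
    intro hd
    obtain ⟨-, hcur⟩ := ih (by omega)
    rw [hcast]
    refine ⟨hcur, HamCycle.succ_eq_of_pred_eq (hcur ▸ hQ (d + 1) (by omega) (by omega)) ?_⟩
    simpa using (ih (by omega)).1

end

variable {V E C : Type}

namespace Multigraph

variable {G : Multigraph V E} {e : E} {x y : V}

lemma joins.inc_left (h : G.joins e x y) : G.inc x e := by
  rcases h with ⟨h, -⟩ | ⟨-, h⟩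
  exacts [.inl h, .inr h]

lemma joins.inc_right (h : G.joins e x y) : G.inc y e := by
  rcases h with ⟨-, h⟩ | ⟨h, -⟩
  exacts [.inr h, .inl h]

lemma joins.eq_or_eq_of_inc {z : V} (h : G.joins e x y) (hz : G.inc z e) : z = x ∨ z = y := by
  rcases h with ⟨rfl, rfl⟩ | ⟨rfl, rfl⟩ <;> rcases hz with rfl | rfl <;> simp

end Multigraph

def L2V.equivProdBool (G : Multigraph V E) [DecidableEq V] : L2V G ≃ E × Bool where
  toFun p := (p.val.2, decide (p.val.1 = G.fst p.val.2))
  invFun q :=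
    ⟨(if q.2 then G.fst q.1 else G.snd q.1, q.1), by cases q.2 <;> simp [Multigraph.inc]⟩
  left_inv := by
    rintro ⟨⟨x, e⟩, h⟩
    apply Subtype.ext
    rcases h with h | h <;> dsimp only at h <;> subst h <;> simp [Ne.symm (G.loopless e)]
  right_inv := by
    rintro ⟨e, _ | _⟩ <;> simp [Ne.symm (G.loopless e)]

lemma card_LnGraph_vert (G : Multigraph V E) [Fintype V] [Fintype E] [DecidableEq V] {n : ℕ}
    (hn : 2 ≤ n) :
    Fintype.card (L2V G ⊕ E × Fin (n - 2)) = n * Fintype.card E := by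
  rw [Fintype.card_sum, Fintype.card_congr (L2V.equivProdBool G), Fintype.card_prod,
    Fintype.card_prod, Fintype.card_bool, Fintype.card_fin]
  obtain ⟨m, rfl⟩ : ∃ m, n = m + 2 := ⟨n - 2, by omega⟩
  rw [Nat.add_sub_cancel]
  ring

variable {G : Multigraph V E} {adjH : C → C → Prop} {c : E → C} {n : ℕ}

lemma adj_inl_inl (hH : Symmetric adjH) (hn : 3 ≤ n) {p q : L2V G}
    (h : (LnGraph G adjH c n).Adj (.inl p) (.inl q)) :
    p.val.2 ≠ q.val.2 ∧
      ((p.val.1 = q.val.1 ∧ adjH (c p.val.2) (c q.val.2)) ∨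
       (p.val.1 ≠ q.val.1 ∧ G.parallel p.val.2 q.val.2)) := by
  rcases h with h | h <;> simp only [LnAdj] at h <;>
    rcases h with ⟨h1, h2, h3⟩ | ⟨h1, h2, h3⟩ | ⟨h1, -⟩
  · exact ⟨h2, .inl ⟨h1, h3⟩⟩
  · exact ⟨h2, .inr ⟨h1, h3⟩⟩
  · omega
  · exact ⟨Ne.symm h2, .inl ⟨h1.symm, hH h3⟩⟩
  · refine ⟨Ne.symm h2, .inr ⟨Ne.symm h1, ?_⟩⟩
    rcases h3 with ⟨h4, h5⟩ | ⟨h4, h5⟩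
    exacts [.inl ⟨h4.symm, h5.symm⟩, .inr ⟨h5.symm, h4.symm⟩]
  · omega

lemma adj_inl_inr {p : L2V G} {g : E} {j : Fin (n - 2)}
    (h : (LnGraph G adjH c n).Adj (.inl p) (.inr (g, j))) :
    p.val.2 = g ∧
      ((p.val.1 = G.fst g ∧ j.val = 0) ∨ (p.val.1 = G.snd g ∧ j.val = n - 3)) := by
  rcases h with h | h <;> exact h

lemma adj_inr_inr {e g : E} {i j : Fin (n - 2)}
    (h : (LnGraph G adjH c n).Adj (.inr (e, i)) (.inr (g, j))) :
    e = g ∧ (i.val + 1 = j.val ∨ j.val + 1 = i.val) := by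
  rcases h with ⟨h1, h2⟩ | ⟨h1, h2⟩
  exacts [⟨h1, h2⟩, ⟨h1.symm, h2.symm⟩]

lemma dynStep_of_adj (hH : Symmetric adjH) (hn : 3 ≤ n) {x y u v : V} {e g : E}
    (he : G.joins e x y) (hg : G.joins g u v)
    (hadj : (LnGraph G adjH c n).Adj (.inl ⟨(y, e), he.inc_right⟩)
      (.inl ⟨(u, g), hg.inc_left⟩)) :
    DynStep G adjH c (x, y, e) (u, v, g) := by
  obtain ⟨hne, ⟨hyu, hcol⟩ | ⟨hyu, hpar⟩⟩ := adj_inl_inl hH hn hadj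
  · exact .inl ⟨hyu, hcol⟩
  · have := G.loopless e
    have := G.loopless g
    refine .inr ⟨?_, ?_, hne, hpar⟩ <;>
      simp only [Multigraph.joins, Multigraph.parallel] at he hg hpar hyu ⊢ <;> grind

lemma forall_mem_zip_rotate_map_range {α : Type*} {R : α → α → Prop} {f : ℕ → α} {K : ℕ}
    (hK : f K = f 0) (hR : ∀ t, R (f t) (f (t + 1))) :
    ∀ p ∈ ((List.range K).map f).zip (((List.range K).map f).rotate 1), R p.1 p.2 := by
  have hrot : ((List.range K).map f).rotate 1 = (List.range K).map (fun t => f (t + 1)) := by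
    refine List.ext_getElem (by simp) fun i h1 h2 => ?_
    simp only [List.getElem_rotate, List.getElem_map, List.getElem_range, List.length_map,
      List.length_range]
    rcases (show i + 1 ≤ K by simp at h2; omega).lt_or_eq with h | h
    · rw [Nat.mod_eq_of_lt h]
    · rw [h, Nat.mod_self, hK]
  rw [hrot, List.zip_map']
  simp only [List.mem_map]
  rintro _ ⟨t, -, rfl⟩
  exact hR t

lemma isClosedDynHTrail_map_range {K : ℕ} (hK : 0 < K) {tr : ℕ → V × V × E}
    (hjoins : ∀ t, G.joins (tr t).2.2 (tr t).1 (tr t).2.1)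
    (hstep : ∀ t, DynStep G adjH c (tr t) (tr (t + 1))) (hwrap : tr K = tr 0)
    (hinj : Set.InjOn (fun t => (tr t).2.2) (Set.Iio K)) :
    IsClosedDynHTrail G adjH c ((List.range K).map tr) := by
  refine ⟨by simp [hK.ne'], ?_, fun a ha => ?_, forall_mem_zip_rotate_map_range hwrap hstep⟩
  · simp only [edgesOf, List.map_map]
    exact List.nodup_range.map_on fun t ht t' ht' h =>
      hinj (Set.mem_Iio.2 (List.mem_range.1 ht)) (Set.mem_Iio.2 (List.mem_range.1 ht')) h
  · obtain ⟨t, -, rfl⟩ := List.mem_map.1 ha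
    exact hjoins t

lemma mem_edgesOf_map_range [Fintype E] {tr : ℕ → V × V × E}
    (hinj : Set.InjOn (fun t => (tr t).2.2) (Set.Iio (Fintype.card E))) (e : E) :
    e ∈ edgesOf ((List.range (Fintype.card E)).map tr) := by
  have hbij : Function.Bijective fun t : Fin (Fintype.card E) => (tr t).2.2 :=
    (Fintype.bijective_iff_injective_and_card _).2
      ⟨fun t t' h => Fin.ext (hinj t.isLt t'.isLt h), Fintype.card_fin _⟩
  obtain ⟨t, rfl⟩ := hbij.2 e
  simp only [edgesOf, List.map_map, List.mem_map, List.mem_range]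
  exact ⟨t, t.isLt, rfl⟩

/-- The path of `L_n^H(G)` subdividing `e`, from `f(fst e, e)` at `m = 0`
to `f(snd e, e)` at `m = n - 1`. -/
def pathVert (G : Multigraph V E) (n : ℕ) (e : E) (m : ℕ) : L2V G ⊕ E × Fin (n - 2) :=
  if h0 : m = 0 then .inl ⟨(G.fst e, e), .inl rfl⟩
  else if h : m < n - 1 then .inr (e, ⟨m - 1, by omega⟩)
  else .inl ⟨(G.snd e, e), .inr rfl⟩

lemma pathVert_zero (e : E) : pathVert G n e 0 = .inl ⟨(G.fst e, e), .inl rfl⟩ := rfl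

lemma pathVert_of_lt {e : E} {m : ℕ} (h0 : 0 < m) (hm : m < n - 1) :
    pathVert G n e m = .inr (e, ⟨m - 1, by omega⟩) := by
  rw [pathVert, dif_neg h0.ne', dif_pos hm]

lemma pathVert_of_le {e : E} {m : ℕ} (h0 : 0 < m) (hm : n - 1 ≤ m) :
    pathVert G n e m = .inl ⟨(G.snd e, e), .inr rfl⟩ := by
  rw [pathVert, dif_neg h0.ne', dif_neg (by omega)]

lemma isSuspendedPath_pathVert (e : E) :
    IsSuspendedPath (LnGraph G adjH c n) (pathVert G n e) (n - 1) := by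
  intro m h0 hm w hw
  rw [pathVert_of_lt h0 hm] at hw
  rcases w with p | ⟨g, j⟩
  · obtain ⟨rfl, ⟨h1, h2⟩ | ⟨h1, h2⟩⟩ := adj_inl_inr (adjH := adjH) (c := c) hw.symm
    · obtain rfl : m = 1 := by simp only at h2; omega
      exact .inl (congrArg Sum.inl (Subtype.ext (Prod.ext h1 rfl)))
    · rw [pathVert_of_le (m := m + 1) (by omega) (by simp only at h2; omega)]
      exact .inr (congrArg Sum.inl (Subtype.ext (Prod.ext h1 rfl)))
  · obtain ⟨rfl, h | h⟩ := adj_inr_inr hw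
    · simp only at h
      rw [pathVert_of_lt (m := m - 1) (by omega) (by omega)]
      left; congr; exact Fin.ext (by dsimp only; omega)
    · simp only at h
      rw [pathVert_of_lt (m := m + 1) (by omega) (by omega)]
      right; congr; exact Fin.ext (by dsimp only; omega)

variable [DecidableEq V]

def lanePath (G : Multigraph V E) (n : ℕ) (t : V × V × E) : ℕ → L2V G ⊕ E × Fin (n - 2) :=
  if t.1 = G.fst t.2.2 then pathVert G n t.2.2 else fun d => pathVert G n t.2.2 (n - 1 - d)

lemma isSuspendedPath_lanePath (t : V × V × E) :
    IsSuspendedPath (LnGraph G adjH c n) (lanePath G n t) (n - 1) := by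
  unfold lanePath
  split
  exacts [isSuspendedPath_pathVert _, (isSuspendedPath_pathVert _).reverse]

lemma lanePath_zero (hn : 2 ≤ n) {e : E} {x y : V} (h : G.joins e x y) :
    lanePath G n (x, y, e) 0 = .inl ⟨(x, e), h.inc_left⟩ := by
  have := G.loopless e
  rcases h with ⟨rfl, rfl⟩ | ⟨rfl, rfl⟩
  · simp [lanePath, pathVert_zero]
  · simp only [lanePath, if_neg this.symm, Nat.sub_zero]
    rw [pathVert_of_le (by omega) le_rfl]

lemma lanePath_last (hn : 2 ≤ n) {e : E} {x y : V} (h : G.joins e x y) :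
    lanePath G n (x, y, e) (n - 1) = .inl ⟨(y, e), h.inc_right⟩ := by
  have := G.loopless e
  rcases h with ⟨rfl, rfl⟩ | ⟨rfl, rfl⟩
  · simp only [lanePath, if_true]
    rw [pathVert_of_le (by omega) le_rfl]
  · simp [lanePath, if_neg this.symm, pathVert_zero]

lemma lanePath_of_lt {d : ℕ} (h0 : 0 < d) (hd : d < n - 1) (t : V × V × E) :
    ∃ j, lanePath G n t d = .inr (t.2.2, j) := by
  unfold lanePath
  split
  exacts [⟨_, pathVert_of_lt h0 hd⟩, ⟨_, pathVert_of_lt (by omega) (by omega)⟩]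

lemma eq_lanePath_of_adj_lanePath_last (hn : 3 ≤ n) {e : E} {x y : V} (h : G.joins e x y)
    {w : E × Fin (n - 2)}
    (hw : (LnGraph G adjH c n).Adj (lanePath G n (x, y, e) (n - 1)) (.inr w)) :
    .inr w = lanePath G n (x, y, e) (n - 2) := by
  rw [lanePath_last (by omega) h] at hw
  obtain ⟨rfl, ⟨hy, hj⟩ | ⟨hy, hj⟩⟩ := adj_inl_inr (adjH := adjH) (c := c) hw
  all_goals
    have := G.loopless w.1
    simp only at hy hj
    rcases h with ⟨rfl, rfl⟩ | ⟨rfl, rfl⟩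
  · exact absurd hy.symm this
  · simp only [lanePath, if_neg this.symm,
      pathVert_of_lt (n := n) (m := n - 1 - (n - 2)) (by omega) (by omega)]
    exact congrArg Sum.inr (Prod.ext rfl (Fin.ext (by dsimp only; omega)))
  · simp only [lanePath, if_true, pathVert_of_lt (n := n) (m := n - 2) (by omega) (by omega)]
    exact congrArg Sum.inr (Prod.ext rfl (Fin.ext (by dsimp only; omega)))
  · exact absurd hy this

variable {N : ℕ}

def HamCycle.IsBlock (cyc : HamCycle (LnGraph G adjH c n) N) (s : ZMod N) (t : V × V × E) :
    Prop :=
  G.joins t.2.2 t.1 t.2.1 ∧ ∀ d < n, cyc.vert (s + d) = lanePath G n t d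

namespace HamCycle

lemma exists_isBlock (cyc : HamCycle (LnGraph G adjH c n) N) (hn : 3 ≤ n) (e : E) :
    ∃ s x y, cyc.IsBlock s (x, y, e) := by
  have hP := isSuspendedPath_pathVert (G := G) (adjH := adjH) (c := c) (n := n) e
  obtain ⟨k, hk⟩ := cyc.bijective.2 (pathVert G n e 1)
  have hnb := hP 1 one_pos (by omega)
  rw [← hk] at hnb
  rcases hnb _ (cyc.adj k).symm with hsucc | hsucc
  · -- the cycle runs through the path of `e` backwards
    have hrev := cyc.reverse.vert_add_eq_of_isSuspendedPath hP (k := -(k + 1))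
      (by simpa [reverse] using hsucc) (by simpa [reverse] using hk)
    refine ⟨k + 1 - (n - 1 : ℕ), G.snd e, G.fst e, .inr ⟨rfl, rfl⟩, fun d hd => ?_⟩
    simp only [lanePath, if_neg (G.loopless e).symm]
    have := hrev (n - 1 - d) (by omega)
    simp only [reverse] at this
    rw [← this]
    congr 1
    push_cast [Nat.cast_sub (show 1 ≤ n by omega), Nat.cast_sub (show d ≤ n - 1 by omega)]
    ring
  · have hpred := pred_eq_of_succ_eq (fun w hw => (hnb w hw).symm) hsucc
    refine ⟨k - 1, G.fst e, G.snd e, .inl ⟨rfl, rfl⟩, fun d hd => ?_⟩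
    simp only [lanePath, if_true]
    exact cyc.vert_add_eq_of_isSuspendedPath hP hpred (by simpa using hk) d (by omega)

namespace IsBlock

variable {cyc : HamCycle (LnGraph G adjH c n) N} {s : ZMod N} {t : V × V × E}

lemma vert_start (hn : 3 ≤ n) (hB : cyc.IsBlock s t) :
    cyc.vert s = .inl ⟨(t.1, t.2.2), hB.1.inc_left⟩ := by
  simpa [lanePath_zero (n := n) (by omega) hB.1] using hB.2 0 (by omega)

lemma vert_finish (hn : 3 ≤ n) (hB : cyc.IsBlock s t) :
    cyc.vert (s + n - 1) = .inl ⟨(t.2.1, t.2.2), hB.1.inc_right⟩ := by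
  rw [← lanePath_last (by omega) hB.1, ← hB.2 (n - 1) (by omega), add_sub_assoc,
    Nat.cast_pred (by omega)]

lemma vert_add_one (hn : 3 ≤ n) (hB : cyc.IsBlock s t) :
    ∃ j, cyc.vert (s + 1) = .inr (t.2.2, j) := by
  obtain ⟨j, hj⟩ := lanePath_of_lt (G := G) (n := n) one_pos (by omega) t
  exact ⟨j, by simpa using (hB.2 1 (by omega)).trans hj⟩

lemma exit (hn : 3 ≤ n) (hB : cyc.IsBlock s t) : ∃ p : L2V G, cyc.vert (s + n) = .inl p ∧
    (LnGraph G adjH c n).Adj (.inl ⟨(t.2.1, t.2.2), hB.1.inc_right⟩) (.inl p) := by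
  have hadj := cyc.adj (s + n - 1)
  rw [hB.vert_finish hn, sub_add_cancel] at hadj
  rcases hexit : cyc.vert (s + n) with p | w
  · exact ⟨p, rfl, hexit ▸ hadj⟩
  · -- the only internal neighbour of `f(y, e)` already sits at `s + n - 2`
    rw [hexit, ← lanePath_last (by omega) hB.1] at hadj
    have := eq_lanePath_of_adj_lanePath_last hn hB.1 hadj
    rw [← hexit, ← hB.2 (n - 2) (by omega)] at this
    have h2 := cyc.succ_ne_pred (s + n - 1)
    rw [sub_add_cancel] at h2
    refine (h2 (this.trans (congrArg cyc.vert ?_))).elim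
    push_cast [Nat.cast_sub (show 2 ≤ n by omega)]
    ring

lemma unique (hn : 3 ≤ n) {t' : V × V × E} (hB : cyc.IsBlock s t) (hB' : cyc.IsBlock s t') :
    t = t' := by
  have h1 := congrArg Subtype.val (Sum.inl_injective
    ((hB.vert_start hn).symm.trans (hB'.vert_start hn)))
  have h2 := congrArg Subtype.val (Sum.inl_injective
    ((hB.vert_finish hn).symm.trans (hB'.vert_finish hn)))
  simp only [Prod.mk.injEq] at h1 h2
  exact Prod.ext h1.1 (Prod.ext h2.1 h1.2)

lemma eq_of_edge (hn : 3 ≤ n) {s' : ZMod N} {t' : V × V × E} (hB : cyc.IsBlock s t)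
    (hB' : cyc.IsBlock s' t') (he : t.2.2 = t'.2.2) : s = s' := by
  obtain ⟨x, y, e⟩ := t
  obtain ⟨x', y', e'⟩ := t'
  obtain rfl : e = e' := he
  rcases hB.1.eq_or_eq_of_inc hB'.1.inc_left with rfl | rfl
  · exact cyc.bijective.1 ((hB.vert_start hn).trans (hB'.vert_start hn).symm)
  · have hs' : s' = s + n - 1 :=
      cyc.bijective.1 ((hB'.vert_start hn).trans (hB.vert_finish hn).symm)
    obtain ⟨p, hp, -⟩ := hB.exit hn
    obtain ⟨j, hj⟩ := hB'.vert_add_one hn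
    rw [hs', sub_add_cancel, hp] at hj
    exact absurd hj Sum.inl_ne_inr

lemma next (hH : Symmetric adjH) (hn : 3 ≤ n) (hB : cyc.IsBlock s t) :
    ∃ t', cyc.IsBlock (s + n) t' ∧ DynStep G adjH c t t' := by
  obtain ⟨⟨⟨z, g⟩, hz⟩, hp, hadj⟩ := hB.exit hn
  obtain ⟨s', u, v, hB'⟩ := cyc.exists_isBlock hn g
  rcases hB'.1.eq_or_eq_of_inc hz with rfl | rfl
  · have hs' : s' = s + n := cyc.bijective.1 ((hB'.vert_start hn).trans hp.symm)
    exact ⟨(z, v, g), hs' ▸ hB', dynStep_of_adj hH hn hB.1 hB'.1 hadj⟩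
  · -- then the block of `g` would start at `s + 1`, inside the block of `e`
    have hs' : s' = s + 1 := by
      have := cyc.bijective.1 ((hB'.vert_finish hn).trans hp.symm)
      linear_combination this
    obtain ⟨j, hj⟩ := hB.vert_add_one hn
    rw [← hs', hB'.vert_start hn] at hj
    exact absurd hj Sum.inl_ne_inr

end IsBlock

end HamCycle

theorem HamCycle.exists_euler_dynHTrail [Fintype E] (hH : Symmetric adjH) (hn : 3 ≤ n)
    (cyc : HamCycle (LnGraph G adjH c n) (n * Fintype.card E)) :
    ∃ L : List (V × V × E), IsClosedDynHTrail G adjH c L ∧ ∀ e : E, e ∈ edgesOf L := by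
  set K := Fintype.card E
  have hK : 0 < K := by
    rcases cyc.vert 0 with p | w
    exacts [Fintype.card_pos_iff.2 ⟨p.val.2⟩, Fintype.card_pos_iff.2 ⟨w.1⟩]
  obtain ⟨s₀, _, _, hB₀⟩ := cyc.exists_isBlock hn (Fintype.card_pos_iff.1 hK).some
  have hblock : ∀ t : ℕ, ∃ tr, cyc.IsBlock (s₀ + (t * n : ℕ)) tr := by
    intro t
    induction t with
    | zero => exact ⟨_, by simpa using hB₀⟩
    | succ t ih =>
      obtain ⟨tr, hB, -⟩ := ih.choose_spec.next hH hn
      exact ⟨tr, by simpa [add_mul, add_assoc] using hB⟩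
  choose tr htr using hblock
  refine ⟨_, isClosedDynHTrail_map_range hK (fun t => (htr t).1) (fun t => ?_) ?_ ?_,
    mem_edgesOf_map_range ?_⟩
  · obtain ⟨_, hB, hstep⟩ := (htr t).next hH hn
    rwa [(htr (t + 1)).unique hn (by simpa [add_mul, add_assoc] using hB)]
  · refine (htr K).unique hn ?_
    simpa [mul_comm K n, ZMod.natCast_self] using htr 0
  all_goals
    intro t ht t' ht' he
    have := congrArg ZMod.val ((add_right_inj _).1 ((htr t).eq_of_edge hn (htr t') he))
    rw [ZMod.val_natCast_of_lt (by simp at ht; nlinarith),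
      ZMod.val_natCast_of_lt (by simp at ht'; nlinarith)] at this
    exact Nat.eq_of_mul_eq_mul_right (by omega) this

/-- If `L_n^H(G)` is Hamiltonian for some `n ≥ 3`, then the `H`-colored multigraph
`G` has a closed Euler dynamic `H`-trail. -/
theorem Ln_hamiltonian_imp_euler_dynHTrail {V E C : Type}
    [Fintype V] [Fintype E] [DecidableEq V] [DecidableEq E]
    (G : Multigraph V E) (adjH : C → C → Prop) (hH : Symmetric adjH) (c : E → C)
    (hHam : ∃ n : ℕ, 3 ≤ n ∧ (LnGraph G adjH c n).IsHamiltonian) :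
    ∃ L : List (V × V × E),
      IsClosedDynHTrail G adjH c L ∧ ∀ e : E, e ∈ edgesOf L := by
  obtain ⟨n, hn, hHam⟩ := hHam
  have hcard : Fintype.card (L2V G ⊕ E × Fin (n - 2)) = n * Fintype.card E :=
    card_LnGraph_vert (n := n) G (by omega)
  obtain ⟨cyc⟩ := hcard ▸ nonempty_hamCycle_of_isHamiltonian hHam (by
    rw [hcard]; intro h; have := Nat.eq_one_of_mul_eq_one_right h; omega)
  exact cyc.exists_euler_dynHTrail hH hn

end DynH
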